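/- Theorem 2 (equivalence of PaTh and the iterative variance-rescaling scheme). Fix y ∈ ℝⁿ, X ∈ ℝ^{n×p}, c > 0, p ≥ 2, and for every s ∈ {0,1,…,n} a support estimate Ŝ_s ⊆ {1,…,p} with |Ŝ_s| = s and Ŝ_0 = ∅; set σ̂_s² = ‖Π⊥[Ŝ_s] y‖₂²/n and Δ_s = Δ(Ŝ_s). Suppose σ̂_0 > σ̂_1 > ⋯ > σ̂_{n−1} > σ̂_n > 0 and that there exists some s with Δ_s < 2c σ̂_s² log p; let ŝ be the smallest such s (the PaTh output is Ŝ_ŝ). Consider the iteration: given a current estimate σ̂ > 0, put t(σ̂) = min{ s : Δ_s < 2c σ̂² log p }, update σ̂_new = σ̂_{t(σ̂)}, and repeat until σ̂_new = σ̂. Then, initialized at σ̂ = σ̂_0 = ‖y‖₂/√n, this iteration reaches an equilibrium σ̂ = σ̂_T with T = t(σ̂_T), and the corresponding output Ŝ_T equals the PaTh output Ŝ_ŝ (i.e., T = ŝ). -/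

import Mathlib

open MeasureTheory Real

/-- `Π⊥[S] v`: the orthogonal projection of `v` onto the orthogonal complement of the
column span of the columns of `X` indexed by `S` (so `Π⊥[∅] = id`). -/
noncomputable def projPerp {n p : ℕ} (X : Fin p → EuclideanSpace ℝ (Fin n))
    (S : Finset (Fin p)) (v : EuclideanSpace ℝ (Fin n)) : EuclideanSpace ℝ (Fin n) :=
  v - (Submodule.orthogonalProjection (Submodule.span ℝ (X '' ↑S)) v : EuclideanSpace ℝ (Fin n))

/-- `Δ(S) = max_{j ∉ S} (‖Π⊥[S] y‖² − ‖Π⊥[S∪{j}] y‖²)`. -/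
noncomputable def pathDelta {n p : ℕ} (X : Fin p → EuclideanSpace ℝ (Fin n))
    (S : Finset (Fin p)) (y : EuclideanSpace ℝ (Fin n)) : ℝ :=
  ⨆ j : {j : Fin p // j ∉ S}, (‖projPerp X S y‖ ^ 2 - ‖projPerp X (insert j.1 S) y‖ ^ 2)

/-!
Write `A v = {s ≤ n | Δ_s < 2c v log p}`, so that `t v = min (A v)` and `ŝ = min {s | s ∈ A σ̂_s²}`.
The sets `A v` grow with `v` and `σ̂_s²` decreases in `s`. Hence for `s ≤ ŝ` we get
`ŝ ∈ A σ̂_ŝ² ⊆ A σ̂_s²`, i.e. `t σ̂_s² ≤ ŝ`; and `t σ̂_s² ≥ s`, since an `r < s` in `A σ̂_s² ⊆ A σ̂_r²`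
would undercut `ŝ`. So the iterates started at `0` increase and stay below `ŝ`, hence they
stabilise at some `T ≤ ŝ`; a fixed point satisfies `T ∈ A σ̂_T²`, hence also `ŝ ≤ T`.
-/

theorem Nat.exists_succ_eq_of_le_succ_of_le {u : ℕ → ℕ} {N : ℕ} (hmono : ∀ m, u m ≤ u (m + 1))
    (hbdd : ∀ m, u m ≤ N) : ∃ M, u (M + 1) = u M := by
  by_contra! hne
  have hstrict : StrictMono u :=
    strictMono_nat_of_lt_succ fun m => (hmono m).lt_of_ne (hne m).symm
  exact (hstrict.le_apply (x := N + 1)).not_gt (Nat.lt_succ_of_le (hbdd _))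

section DiagonalInf

variable {α : Type*} [Preorder α] {n : ℕ} {A : α → Set ℕ} {σ : ℕ → α}
  (hA : Monotone A) (hAn : ∀ v, A v ⊆ Set.Iic n) (hσ : AntitoneOn σ (Set.Iic n))
  (hD : {s | s ∈ A (σ s)}.Nonempty)
include hA hAn hσ hD

theorem sInf_diag_mem_of_le {s : ℕ} (hs : s ≤ sInf {s | s ∈ A (σ s)}) :
    sInf {s | s ∈ A (σ s)} ∈ A (σ s) := by
  have hmem := Nat.sInf_mem hD
  have hσ_le : σ (sInf {s | s ∈ A (σ s)}) ≤ σ s := hσ (hs.trans (hAn _ hmem)) (hAn _ hmem) hs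
  exact hA hσ_le hmem

theorem sInf_le_sInf_diag {s : ℕ} (hs : s ≤ sInf {s | s ∈ A (σ s)}) :
    sInf (A (σ s)) ≤ sInf {s | s ∈ A (σ s)} :=
  Nat.sInf_le (sInf_diag_mem_of_le hA hAn hσ hD hs)

theorem le_sInf_of_le_sInf_diag {s : ℕ} (hs : s ≤ sInf {s | s ∈ A (σ s)}) :
    s ≤ sInf (A (σ s)) := by
  by_contra! hlt
  have hr : sInf (A (σ s)) ∈ A (σ s) := Nat.sInf_mem ⟨_, sInf_diag_mem_of_le hA hAn hσ hD hs⟩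
  have hsn : s ≤ n := hs.trans (hAn _ (Nat.sInf_mem hD))
  have hr_diag : sInf (A (σ s)) ∈ {s | s ∈ A (σ s)} :=
    hA (hσ (hAn _ hr) hsn hlt.le) hr
  exact (Nat.sInf_le hr_diag).not_gt (hlt.trans_le hs)

theorem sInf_diag_le_of_sInf_eq {T : ℕ} (hT : T ≤ sInf {s | s ∈ A (σ s)})
    (hfix : sInf (A (σ T)) = T) : sInf {s | s ∈ A (σ s)} ≤ T := by
  have hmem : sInf (A (σ T)) ∈ A (σ T) := Nat.sInf_mem ⟨_, sInf_diag_mem_of_le hA hAn hσ hD hT⟩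
  rw [hfix] at hmem
  exact Nat.sInf_le hmem

theorem exists_iterate_fixed_eq_sInf_diag {u : ℕ → ℕ} (hu0 : u 0 = 0)
    (hu : ∀ m, u (m + 1) = sInf (A (σ (u m)))) :
    ∃ M, u (M + 1) = u M ∧ u M = sInf {s | s ∈ A (σ s)} := by
  have hbdd : ∀ m, u m ≤ sInf {s | s ∈ A (σ s)} := by
    intro m
    induction m with
    | zero => simp [hu0]
    | succ m ih => rw [hu]; exact sInf_le_sInf_diag hA hAn hσ hD ih
  have hmono : ∀ m, u m ≤ u (m + 1) := fun m => by
    rw [hu]; exact le_sInf_of_le_sInf_diag hA hAn hσ hD (hbdd m)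
  obtain ⟨M, hM⟩ := Nat.exists_succ_eq_of_le_succ_of_le hmono hbdd
  refine ⟨M, hM, le_antisymm (hbdd M) (sInf_diag_le_of_sInf_eq hA hAn hσ hD (hbdd M) ?_)⟩
  rw [← hu, hM]

end DiagonalInf

theorem path_equals_variance_rescaling_iteration_general {n p : ℕ}
    (X : Fin p → EuclideanSpace ℝ (Fin n)) (y : EuclideanSpace ℝ (Fin n))
    (c : ℝ) (hc : 0 < c)
    (Shat : ℕ → Finset (Fin p))
    (sigSq : ℕ → ℝ)
    (hdec : ∀ s < n, sigSq (s + 1) < sigSq s)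
    (hex : ∃ s ≤ n, pathDelta X (Shat s) y < 2 * c * sigSq s * Real.log p)
    (shat : ℕ)
    (hshat : shat
      = sInf {s | s ≤ n ∧ pathDelta X (Shat s) y < 2 * c * sigSq s * Real.log p})
    (t : ℝ → ℕ)
    (ht : ∀ vSq : ℝ,
      t vSq = sInf {s | s ≤ n ∧ pathDelta X (Shat s) y < 2 * c * vSq * Real.log p})
    (u : ℕ → ℕ) (hu0 : u 0 = 0) (hu : ∀ m, u (m + 1) = t (sigSq (u m))) :
    ∃ M, u (M + 1) = u M ∧ t (sigSq (u M)) = u M ∧ u M = shat := by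
  set A : ℝ → Set ℕ :=
    fun v => {s | s ≤ n ∧ pathDelta X (Shat s) y < 2 * c * v * Real.log p}
  have hA : Monotone A := fun v w hvw s ⟨hsn, hs⟩ =>
    ⟨hsn, hs.trans_le (by gcongr)⟩
  have hσ : AntitoneOn sigSq (Set.Iic n) := (strictAntiOn_Iic_of_succ_lt hdec).antitoneOn
  obtain ⟨M, hM, hMeq⟩ := exists_iterate_fixed_eq_sInf_diag (A := A) hA (fun _ _ hs => hs.1) hσ
    hex hu0 (fun m => (hu m).trans (ht _))
  exact ⟨M, hM, by rw [← hu, hM], hMeq.trans hshat.symm⟩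

/-- **Theorem 2: equivalence of PaTh and the iterative variance-rescaling scheme.**
Fix data `y, X`, `c > 0`, `p ≥ 2`, support estimates `Ŝ_s` with `|Ŝ_s| = s` and `Ŝ_0 = ∅`,
and set `σ̂_s² = ‖Π⊥[Ŝ_s] y‖²/n`, `Δ_s = Δ(Ŝ_s)`.  Assume `σ̂_0 > σ̂_1 > ⋯ > σ̂_n > 0`
and that some `s` satisfies `Δ_s < 2c σ̂_s² log p`; let `ŝ` be the smallest such `s`
(the PaTh output is `Ŝ_ŝ`).  The iteration `u_0 = 0`, `u_{m+1} = t(σ̂_{u_m})` with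
`t(σ̂) = min{s : Δ_s < 2c σ̂² log p}`, initialized at `σ̂ = σ̂_0 = ‖y‖₂/√n`, reaches an
equilibrium `T` with `T = t(σ̂_T)`, and `T = ŝ`, i.e. `Ŝ_T` equals the PaTh output. -/
theorem path_equals_variance_rescaling_iteration {n p : ℕ}
    (X : Fin p → EuclideanSpace ℝ (Fin n)) (y : EuclideanSpace ℝ (Fin n))
    (c : ℝ) (hc : 0 < c) (hp : 2 ≤ p)
    (Shat : ℕ → Finset (Fin p)) (hcard : ∀ s ≤ n, (Shat s).card = s) (h0 : Shat 0 = ∅)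
    (sigSq : ℕ → ℝ) (hsig : ∀ s, sigSq s = ‖projPerp X (Shat s) y‖ ^ 2 / n)
    (hdec : ∀ s < n, sigSq (s + 1) < sigSq s) (hpos : 0 < sigSq n)
    (hex : ∃ s ≤ n, pathDelta X (Shat s) y < 2 * c * sigSq s * Real.log p)
    (shat : ℕ)
    (hshat : shat
      = sInf {s | s ≤ n ∧ pathDelta X (Shat s) y < 2 * c * sigSq s * Real.log p})
    (t : ℝ → ℕ)
    (ht : ∀ vSq : ℝ,
      t vSq = sInf {s | s ≤ n ∧ pathDelta X (Shat s) y < 2 * c * vSq * Real.log p})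
    (u : ℕ → ℕ) (hu0 : u 0 = 0) (hu : ∀ m, u (m + 1) = t (sigSq (u m))) :
    ∃ M, u (M + 1) = u M ∧ t (sigSq (u M)) = u M ∧ u M = shat :=
  path_equals_variance_rescaling_iteration_general X y c hc Shat sigSq hdec hex shat hshat t ht u
    hu0 hu
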